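/- Let w : ℤ≥0 → [0,∞) be increasing with w(n) → ∞, and suppose for a.e. environment ω there is a constant C_ω > 0 such that the expected hitting times satisfy T(n) ≥ C_ω w(n) for all n. Then for any ε > 0, for a.e. ω, P_ω-almost surely X_t ≤ w^{-1}((2t)^{1+ε}) for all but finitely many t ∈ ℤ≥0. -/

import Mathlib

open MeasureTheory Filter Finset Real
open scoped ENNReal

noncomputable section

/-- One-step transition kernel for the nearest-neighbour walk on ℤ≥0 in environment `p`:
from `n ≥ 1` jump to `n-1` with probability `p n` and to `n+1` with probability `q n = 1 - p n`;
from `0` stay at `0` with probability `p 0` and jump to `1` with probability `q 0`. -/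
def step (p : ℕ → ℝ) (n m : ℕ) : ℝ :=
  if n = 0 then (if m = 0 then p 0 else if m = 1 then 1 - p 0 else 0)
  else (if m = n - 1 then p n else if m = n + 1 then 1 - p n else 0)

/-- `X` is (a version of) the quenched walk in environment `p` under the law `μ`:
it starts at `0` and has the (time-homogeneous) Markov property with transition kernel
`step p`, i.e. conditionally on the whole history up to time `t` with current state `x t`,
the next state is `m` with probability `step p (x t) m`. -/
def IsQuenchedWalk {Ω : Type*} [MeasurableSpace Ω] (μ : Measure Ω)
    (X : ℕ → Ω → ℕ) (p : ℕ → ℝ) : Prop :=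
  (∀ t, Measurable (X t)) ∧ (∀ᵐ ω ∂μ, X 0 ω = 0) ∧
  ∀ (t : ℕ) (x : ℕ → ℕ) (m : ℕ),
    μ {ω | X (t + 1) ω = m ∧ ∀ s ≤ t, X s ω = x s}
      = ENNReal.ofReal (step p (x t) m) * μ {ω | ∀ s ≤ t, X s ω = x s}

/-- First hitting time of `n` by the process `X` (with value `∞` if `n` is never hit). -/
def hitTime {Ω : Type*} (X : ℕ → Ω → ℕ) (n : ℕ) (ω : Ω) : ℝ≥0∞ :=
  sInf ((fun t : ℕ => (t : ℝ≥0∞)) '' {t : ℕ | X t ω = n})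

/-- `D_i = ∏_{j=0}^{i-1} p_j/q_j` (empty product is `1`). -/
def Denv (p : ℕ → ℝ) (i : ℕ) : ℝ := ∏ j ∈ Finset.range i, p j / (1 - p j)

/-- `f(n) = ∑_{i=0}^{n} D_i`. -/
def fenv (p : ℕ → ℝ) (n : ℕ) : ℝ := ∑ i ∈ Finset.range (n + 1), Denv p i

/-- `Δ_i = ∑_{j=0}^{i} q_{i-j}^{-1} ∏_{k=i-j+1}^{i} p_k/q_k`. -/
def DeltaEnv (p : ℕ → ℝ) (i : ℕ) : ℝ :=
  ∑ j ∈ Finset.range (i + 1),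
    (1 - p (i - j))⁻¹ * ∏ k ∈ Finset.Icc (i - j + 1) i, p k / (1 - p k)

/-- `T(n) = ∑_{i=0}^{n-1} Δ_i`, the expected hitting time of `n` from `0`. -/
def Texp (p : ℕ → ℝ) (n : ℕ) : ℝ := ∑ i ∈ Finset.range n, DeltaEnv p i

/-!
Write `T = Texp p` and `τₙ` for the hitting time of `n`. Since `T` is harmonic up to the constant
`1` for the walk, the stopped process `T(X (min t τₙ))` has mean `E[min t τₙ]`. As the walk never
jumps over a level, `T(X (min t τₙ)) ≤ T(n)`; this gives `E τₙ ≤ T(n)`, hence `C w(n) ≤ T(n)` by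
hypothesis, and the Markov-type bound `T(n) P(τₙ ≤ t) ≤ t`. Together,
`P(τₙ ≤ t) ≤ t / (C w(n))`. Taking `t = 2ʲ` and `n = w⁻¹((2ʲ)^(1+ε))` the bounds are
`O(2^(-εj))`, so by Borel–Cantelli the walk eventually does not reach level `n_j` by time `2ʲ`,
and interpolating between dyadic times gives the claim.
-/

section Environment

variable {p : ℕ → ℝ}

theorem DeltaEnv_nonneg (hp : ∀ i, p i ∈ Set.Ico (0 : ℝ) 1) (i : ℕ) : 0 ≤ DeltaEnv p i := by
  have hq : ∀ k, 0 < 1 - p k := fun k => sub_pos.2 (hp k).2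
  refine Finset.sum_nonneg fun j _ => mul_nonneg (inv_pos.2 (hq _)).le ?_
  exact Finset.prod_nonneg fun k _ => div_nonneg (hp k).1 (hq k).le

theorem DeltaEnv_succ (i : ℕ) :
    DeltaEnv p (i + 1) = (1 - p (i + 1))⁻¹ + p (i + 1) / (1 - p (i + 1)) * DeltaEnv p i := by
  rw [DeltaEnv, Finset.sum_range_succ', Finset.Icc_eq_empty (by omega), Finset.prod_empty,
    mul_one, Nat.sub_zero, add_comm, DeltaEnv, Finset.mul_sum]
  congr 1
  refine Finset.sum_congr rfl fun j hj => ?_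
  have hj : j ≤ i := Nat.lt_succ_iff.1 (Finset.mem_range.1 hj)
  rw [show i + 1 - (j + 1) = i - j by omega, Finset.prod_Icc_succ_top (by omega)]
  ring

theorem Texp_nonneg (hp : ∀ i, p i ∈ Set.Ico (0 : ℝ) 1) (n : ℕ) : 0 ≤ Texp p n :=
  Finset.sum_nonneg fun i _ => DeltaEnv_nonneg hp i

theorem Texp_monotone (hp : ∀ i, p i ∈ Set.Ico (0 : ℝ) 1) : Monotone (Texp p) := fun _ _ h =>
  Finset.sum_le_sum_of_subset_of_nonneg (Finset.range_subset_range.2 h)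
    fun i _ _ => DeltaEnv_nonneg hp i

theorem step_nonneg (hp : ∀ i, p i ∈ Set.Icc (0 : ℝ) 1) (k m : ℕ) : 0 ≤ step p k m := by
  have := hp k; have := hp 0
  unfold step
  split_ifs <;> simp_all

theorem step_eq_zero {k m : ℕ} (h₁ : m ≠ k - 1) (h₂ : m ≠ k + 1) : step p k m = 0 := by
  unfold step
  split_ifs <;> first | rfl | omega

theorem step_add_step (k : ℕ) : step p k (k - 1) + step p k (k + 1) = 1 := by
  rcases k with _ | k
  · simp [step]
  · simp [step, show k + 1 + 1 ≠ k by omega]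

theorem step_mul_Texp_add (hp : ∀ i, p i ≠ 1) (k : ℕ) :
    step p k (k - 1) * Texp p (k - 1) + step p k (k + 1) * Texp p (k + 1) = Texp p k + 1 := by
  have hq : ∀ i, 1 - p i ≠ 0 := fun i => sub_ne_zero.2 (hp i).symm
  rcases k with _ | k
  · simp [step, Texp, DeltaEnv, hq 0]
  · have hs₁ : step p (k + 1) k = p (k + 1) := by simp [step]
    have hs₂ : step p (k + 1) (k + 2) = 1 - p (k + 1) := by simp [step]
    simp only [Nat.add_sub_cancel, hs₁, hs₂, Texp, Finset.sum_range_succ, DeltaEnv_succ]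
    field_simp [hq (k + 1)]
    ring

theorem tsum_ofReal_step_mul (k : ℕ) (g : ℕ → ℝ≥0∞) :
    ∑' m, ENNReal.ofReal (step p k m) * g m = ENNReal.ofReal (step p k (k - 1)) * g (k - 1) +
      ENNReal.ofReal (step p k (k + 1)) * g (k + 1) := by
  rw [tsum_eq_sum (s := {k - 1, k + 1}), Finset.sum_pair (by omega)]
  intro m hm
  simp only [Finset.mem_insert, Finset.mem_singleton, not_or] at hm
  rw [step_eq_zero hm.1 hm.2, ENNReal.ofReal_zero, zero_mul]

theorem tsum_ofReal_step (hp : ∀ i, p i ∈ Set.Icc (0 : ℝ) 1) (k : ℕ) :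
    ∑' m, ENNReal.ofReal (step p k m) = 1 := by
  simpa [← ENNReal.ofReal_add (step_nonneg hp _ _) (step_nonneg hp _ _), step_add_step] using
    tsum_ofReal_step_mul (p := p) k 1

theorem tsum_ofReal_step_mul_Texp (hp : ∀ i, p i ∈ Set.Ico (0 : ℝ) 1) (k : ℕ) :
    ∑' m, ENNReal.ofReal (step p k m) * ENNReal.ofReal (Texp p m) =
      ENNReal.ofReal (Texp p k) + 1 := by
  have hp' : ∀ i, p i ∈ Set.Icc (0 : ℝ) 1 := fun i => Set.Ico_subset_Icc_self (hp i)
  rw [tsum_ofReal_step_mul, ← ENNReal.ofReal_mul (step_nonneg hp' _ _),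
    ← ENNReal.ofReal_mul (step_nonneg hp' _ _), ← ENNReal.ofReal_add, ← ENNReal.ofReal_one,
    ← ENNReal.ofReal_add (Texp_nonneg hp k) zero_le_one, step_mul_Texp_add fun i => (hp i).2.ne]
  all_goals exact mul_nonneg (step_nonneg hp' _ _) (Texp_nonneg hp _)

end Environment

theorem lt_of_forall_ne_of_le_succ {x : ℕ → ℕ} {n t : ℕ} (h₀ : x 0 ≤ n)
    (hup : ∀ s, x (s + 1) ≤ x s + 1) (hne : ∀ s ≤ t, x s ≠ n) : x t < n := by
  induction t with
  | zero => exact lt_of_le_of_ne h₀ (hne 0 le_rfl)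
  | succ t ih =>
    have := ih fun s hs => hne s (by omega)
    have := hup t
    have := hne (t + 1) le_rfl
    omega

section Paths

variable {Ω : Type*} {X : ℕ → Ω → ℕ}

def pathUpTo (X : ℕ → Ω → ℕ) (t : ℕ) (ω : Ω) : Fin (t + 1) → ℕ := fun i => X i ω

theorem pathUpTo_eq_iff {t : ℕ} {ω : Ω} {x : Fin (t + 1) → ℕ} :
    pathUpTo X t ω = x ↔ ∀ s ≤ t, X s ω = x (Fin.clamp s t) := by
  simp only [funext_iff, pathUpTo, Fin.forall_iff, Nat.lt_succ_iff]
  refine forall₂_congr fun s hs => ?_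
  rw [show Fin.clamp s t = ⟨s, Nat.lt_succ_of_le hs⟩ from Fin.ext (min_eq_left hs)]

def hitBy (X : ℕ → Ω → ℕ) (n t : ℕ) : Set Ω := {ω | ∃ s ≤ t, X s ω = n}

theorem hitBy_eq_preimage_pathUpTo (n t : ℕ) :
    hitBy X n t = pathUpTo X t ⁻¹' {x | ∃ i, x i = n} := by
  ext ω
  simp [hitBy, pathUpTo, Fin.exists_iff]

instance (n t : ℕ) (ω : Ω) : Decidable (ω ∈ hitBy X n t) :=
  inferInstanceAs (Decidable (∃ s ≤ t, X s ω = n))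

/-- `X (min t τₙ)`, where `τₙ` is the hitting time of `n`. -/
def stoppedWalk (X : ℕ → Ω → ℕ) (n t : ℕ) (ω : Ω) : ℕ := if ω ∈ hitBy X n t then n else X t ω

theorem stoppedWalk_zero (n : ℕ) (ω : Ω) : stoppedWalk X n 0 ω = X 0 ω := by
  by_cases h : X 0 ω = n <;> simp [stoppedWalk, hitBy, h]

theorem stoppedWalk_of_mem_hitBy {n t : ℕ} {ω : Ω} (h : ω ∈ hitBy X n t) :
    stoppedWalk X n t ω = n := by
  rw [stoppedWalk, if_pos h]

theorem stoppedWalk_succ (n t : ℕ) (ω : Ω) :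
    stoppedWalk X n (t + 1) ω = if ω ∈ hitBy X n t then n else X (t + 1) ω := by
  by_cases ht : ω ∈ hitBy X n t
  · obtain ⟨s, hs, hsn⟩ := ht
    rw [if_pos ⟨s, hs, hsn⟩, stoppedWalk_of_mem_hitBy ⟨s, hs.trans t.le_succ, hsn⟩]
  · rw [if_neg ht, stoppedWalk]
    split_ifs with ht'
    · obtain ⟨s, hs, hsn⟩ := ht'
      obtain rfl : s = t + 1 := by
        by_contra hst
        exact ht ⟨s, by omega, hsn⟩
      exact hsn.symm
    · rfl

theorem stoppedWalk_le {ω : Ω} (h₀ : X 0 ω = 0) (hup : ∀ s, X (s + 1) ω ≤ X s ω + 1)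
    (n t : ℕ) : stoppedWalk X n t ω ≤ n := by
  unfold stoppedWalk
  split_ifs with h
  · exact le_rfl
  · refine (lt_of_forall_ne_of_le_succ (x := (X · ω)) (by simp [h₀]) hup ?_).le
    simpa [hitBy] using h

theorem hitTime_le_tsum_indicator (n : ℕ) (ω : Ω) :
    hitTime X n ω ≤ ∑' s, (hitBy X n s)ᶜ.indicator 1 ω := by
  by_cases hex : ∃ t, X t ω = n
  · classical
    have hfirst : ∀ s < Nat.find hex, ω ∈ (hitBy X n s)ᶜ := fun s hs ⟨u, hu, hun⟩ =>
      Nat.find_min hex (by omega) hun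
    calc hitTime X n ω ≤ (Nat.find hex : ℝ≥0∞) := sInf_le ⟨_, Nat.find_spec hex, rfl⟩
      _ = ∑ s ∈ Finset.range (Nat.find hex), (hitBy X n s)ᶜ.indicator 1 ω := by
        rw [Finset.sum_congr rfl fun s hs =>
          Set.indicator_of_mem (hfirst s (Finset.mem_range.1 hs)) _]
        simp
      _ ≤ _ := ENNReal.sum_le_tsum _
  · have hnever : ∀ s, ω ∈ (hitBy X n s)ᶜ := fun s ⟨u, _, hun⟩ => hex ⟨u, hun⟩
    simp [Set.indicator_of_mem (hnever _)]

end Paths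

namespace IsQuenchedWalk

variable {Ω : Type*} [MeasurableSpace Ω] {ν : Measure Ω} {X : ℕ → Ω → ℕ} {p : ℕ → ℝ}

theorem measurable_pathUpTo (hX : IsQuenchedWalk ν X p) (t : ℕ) : Measurable (pathUpTo X t) :=
  measurable_pi_lambda _ fun i => hX.1 i

theorem measurableSet_hitBy (hX : IsQuenchedWalk ν X p) (n t : ℕ) :
    MeasurableSet (hitBy X n t) := by
  rw [hitBy_eq_preimage_pathUpTo]
  exact hX.measurable_pathUpTo t MeasurableSet.of_discrete

theorem measure_pathUpTo_succ (hX : IsQuenchedWalk ν X p) (t : ℕ) (x : Fin (t + 1) → ℕ)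
    (m : ℕ) :
    ν {ω | pathUpTo X t ω = x ∧ X (t + 1) ω = m} =
      ENNReal.ofReal (step p (x (Fin.last t)) m) * ν {ω | pathUpTo X t ω = x} := by
  have h := hX.2.2 t (fun s => x (Fin.clamp s t)) m
  simp only [← pathUpTo_eq_iff] at h
  rw [show Fin.clamp t t = Fin.last t from Fin.ext (min_self t)] at h
  simpa only [and_comm] using h

theorem lintegral_pathUpTo_succ (hX : IsQuenchedWalk ν X p) (t : ℕ)
    (F : (Fin (t + 1) → ℕ) → ℕ → ℝ≥0∞) :
    ∫⁻ ω, F (pathUpTo X t ω) (X (t + 1) ω) ∂ν =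
      ∫⁻ ω, ∑' m, ENNReal.ofReal (step p (X t ω) m) * F (pathUpTo X t ω) m ∂ν := by
  have hpath := hX.measurable_pathUpTo t
  have hg : Measurable fun ω => (pathUpTo X t ω, X (t + 1) ω) := hpath.prodMk (hX.1 _)
  calc ∫⁻ ω, F (pathUpTo X t ω) (X (t + 1) ω) ∂ν
      = ∫⁻ z, Function.uncurry F z ∂(ν.map fun ω => (pathUpTo X t ω, X (t + 1) ω)) :=
        (lintegral_map (f := Function.uncurry F) (measurable_of_countable _) hg).symm
    _ = ∫⁻ x, ∑' m, ENNReal.ofReal (step p (x (Fin.last t)) m) * F x m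
          ∂(ν.map (pathUpTo X t)) := by
        rw [lintegral_countable', lintegral_countable', ENNReal.tsum_prod']
        refine tsum_congr fun x => ?_
        rw [← ENNReal.tsum_mul_right]
        refine tsum_congr fun m => ?_
        rw [Measure.map_apply hg (measurableSet_singleton _),
          Measure.map_apply hpath (measurableSet_singleton _)]
        simp only [Function.uncurry_apply_pair, Set.preimage, Set.mem_singleton_iff, Prod.ext_iff,
          measure_pathUpTo_succ hX]
        ring
    _ = _ := lintegral_map (measurable_of_countable _) hpath

theorem ae_succ_le (hX : IsQuenchedWalk ν X p) : ∀ᵐ ω ∂ν, ∀ t, X (t + 1) ω ≤ X t ω + 1 := by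
  refine ae_all_iff.2 fun t => ?_
  have hmeas : MeasurableSet {ω | X t ω + 1 < X (t + 1) ω} :=
    measurableSet_lt ((hX.1 t).add_const 1) (hX.1 (t + 1))
  have hjump := hX.lintegral_pathUpTo_succ t
    fun x m => {m | x (Fin.last t) + 1 < m}.indicator 1 m
  have hjump_null : ∀ ω, ∑' m, ENNReal.ofReal (step p (X t ω) m) *
      {m | pathUpTo X t ω (Fin.last t) + 1 < m}.indicator 1 m = 0 := fun ω =>
    ENNReal.tsum_eq_zero.2 fun m => by
      by_cases hm : X t ω + 1 < m
      · simp [step_eq_zero (p := p) (show m ≠ X t ω - 1 by omega) (show m ≠ X t ω + 1 by omega)]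
      · simp [pathUpTo, hm]
  have hjump_eq : ∫⁻ ω, {m | pathUpTo X t ω (Fin.last t) + 1 < m}.indicator 1 (X (t + 1) ω) ∂ν =
      ν {ω | X t ω + 1 < X (t + 1) ω} := by
    rw [← lintegral_indicator_one hmeas]
    rfl
  rw [ae_iff]
  simpa [hjump_eq, hjump_null] using hjump


theorem lintegral_Texp_stoppedWalk_succ (hX : IsQuenchedWalk ν X p)
    (hp : ∀ i, p i ∈ Set.Ico (0 : ℝ) 1) (n t : ℕ) :
    ∫⁻ ω, ENNReal.ofReal (Texp p (stoppedWalk X n (t + 1) ω)) ∂ν =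
      ∫⁻ ω, ENNReal.ofReal (Texp p (stoppedWalk X n t ω)) ∂ν + ν (hitBy X n t)ᶜ := by
  have hit_iff : ∀ ω, (∃ i, pathUpTo X t ω i = n) ↔ ω ∈ hitBy X n t := fun ω => by
    rw [hitBy_eq_preimage_pathUpTo]; rfl
  have hstep := hX.lintegral_pathUpTo_succ t
    fun x m => ENNReal.ofReal (Texp p (if ∃ i, x i = n then n else m))
  simp only [hit_iff, ← stoppedWalk_succ] at hstep
  rw [hstep, ← lintegral_indicator_one (hX.measurableSet_hitBy n t).compl,
    ← lintegral_add_right _ (measurable_one.indicator (hX.measurableSet_hitBy n t).compl)]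
  refine lintegral_congr fun ω => ?_
  by_cases hω : ω ∈ hitBy X n t
  · simp only [hω, ↓reduceIte]
    rw [stoppedWalk_of_mem_hitBy hω,
      Set.indicator_of_notMem (Set.notMem_compl_iff.2 hω), add_zero, ENNReal.tsum_mul_right,
      tsum_ofReal_step (fun i => Set.Ico_subset_Icc_self (hp i)), one_mul]
  · simp only [hω, ↓reduceIte]
    rw [stoppedWalk, if_neg hω, Set.indicator_of_mem hω, Pi.one_apply,
      tsum_ofReal_step_mul_Texp hp]

theorem lintegral_Texp_stoppedWalk (hX : IsQuenchedWalk ν X p)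
    (hp : ∀ i, p i ∈ Set.Ico (0 : ℝ) 1) (n t : ℕ) :
    ∫⁻ ω, ENNReal.ofReal (Texp p (stoppedWalk X n t ω)) ∂ν =
      ∑ s ∈ Finset.range t, ν (hitBy X n s)ᶜ := by
  induction t with
  | zero =>
    refine (lintegral_congr_ae ?_).trans lintegral_zero
    filter_upwards [hX.2.1] with ω hω
    simp [stoppedWalk_zero, hω, Texp]
  | succ t ih => rw [hX.lintegral_Texp_stoppedWalk_succ hp, ih, Finset.sum_range_succ]

theorem lintegral_hitTime_le [IsProbabilityMeasure ν] (hX : IsQuenchedWalk ν X p)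
    (hp : ∀ i, p i ∈ Set.Ico (0 : ℝ) 1) (n : ℕ) :
    ∫⁻ ω, hitTime X n ω ∂ν ≤ ENNReal.ofReal (Texp p n) := by
  have hstopped : ∀ t, ∑ s ∈ Finset.range t, ν (hitBy X n s)ᶜ ≤ ENNReal.ofReal (Texp p n) := by
    intro t
    rw [← hX.lintegral_Texp_stoppedWalk hp]
    refine (lintegral_mono_ae (g := fun _ => ENNReal.ofReal (Texp p n)) ?_).trans_eq (by simp)
    filter_upwards [hX.2.1, hX.ae_succ_le] with ω h₀ hup
    exact ENNReal.ofReal_le_ofReal (Texp_monotone hp (stoppedWalk_le h₀ hup n t))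
  calc ∫⁻ ω, hitTime X n ω ∂ν
      ≤ ∫⁻ ω, ∑' s, (hitBy X n s)ᶜ.indicator 1 ω ∂ν :=
        lintegral_mono (hitTime_le_tsum_indicator n)
    _ = ∑' s, ν (hitBy X n s)ᶜ := by
        rw [lintegral_tsum fun s =>
          (measurable_one.indicator (hX.measurableSet_hitBy n s).compl).aemeasurable]
        exact tsum_congr fun s => lintegral_indicator_one (hX.measurableSet_hitBy n s).compl
    _ ≤ ENNReal.ofReal (Texp p n) := ENNReal.tsum_le_of_sum_range_le hstopped

theorem ofReal_Texp_mul_measure_hitBy_le [IsProbabilityMeasure ν] (hX : IsQuenchedWalk ν X p)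
    (hp : ∀ i, p i ∈ Set.Ico (0 : ℝ) 1) (n t : ℕ) :
    ENNReal.ofReal (Texp p n) * ν (hitBy X n t) ≤ t :=
  calc ENNReal.ofReal (Texp p n) * ν (hitBy X n t)
      = ∫⁻ ω in hitBy X n t, ENNReal.ofReal (Texp p (stoppedWalk X n t ω)) ∂ν := by
        rw [← setLIntegral_const]
        exact setLIntegral_congr_fun (hX.measurableSet_hitBy n t) fun ω hω => by
          rw [stoppedWalk_of_mem_hitBy hω]
    _ ≤ ∫⁻ ω, ENNReal.ofReal (Texp p (stoppedWalk X n t ω)) ∂ν := setLIntegral_le_lintegral _ _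
    _ = ∑ s ∈ Finset.range t, ν (hitBy X n s)ᶜ := hX.lintegral_Texp_stoppedWalk hp n t
    _ ≤ ∑ _s ∈ Finset.range t, 1 := Finset.sum_le_sum fun s _ => prob_le_one
    _ = t := by simp

end IsQuenchedWalk

/-- `w⁻¹(y)`, with junk value `0` if `w` stays below `y`. -/
def genInv (w : ℕ → ℝ) (y : ℝ) : ℕ := sInf {m : ℕ | y ≤ w m}

section GenInv

variable {w : ℕ → ℝ}

theorem le_apply_genInv (hw : ∀ y, ∃ m, y ≤ w m) (y : ℝ) : y ≤ w (genInv w y) :=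
  Nat.sInf_mem (hw y)

theorem genInv_mono (hw : ∀ y, ∃ m, y ≤ w m) : Monotone (genInv w) := fun _ y' h =>
  Nat.sInf_le (h.trans (le_apply_genInv hw y'))

end GenInv

theorem ae_eventually_notMem_of_ofReal_mul_measure_le {Ω : Type*} [MeasurableSpace Ω]
    {ν : Measure Ω} {A : ℕ → ℕ → Set Ω} {w : ℕ → ℝ} {C ε : ℝ} (hC : 0 < C) (hε : 0 < ε)
    (hw : ∀ y, ∃ m, y ≤ w m) (hA : ∀ n t, ENNReal.ofReal (C * w n) * ν (A n t) ≤ t) :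
    ∀ᵐ ω ∂ν, ∀ᶠ j in atTop, ω ∉ A (genInv w (((2 ^ j : ℕ) : ℝ) ^ (1 + ε))) (2 ^ j) := by
  set r : ℝ := ((2 : ℝ) ^ ε)⁻¹
  have hr : r < 1 := inv_lt_one_of_one_lt₀ (Real.one_lt_rpow one_lt_two hε)
  have hbound : ∀ j : ℕ, ν (A (genInv w (((2 ^ j : ℕ) : ℝ) ^ (1 + ε))) (2 ^ j)) ≤
      ENNReal.ofReal (C⁻¹ * r ^ j) := by
    intro j
    have hb : (0 : ℝ) < 2 ^ j := by positivity
    have hlevel : ((2 ^ j : ℕ) : ℝ) ^ (1 + ε) = 2 ^ j * (2 ^ ε) ^ j := by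
      rw [Nat.cast_pow, Nat.cast_ofNat, Real.rpow_add hb, Real.rpow_one,
        Real.rpow_pow_comm zero_le_two]
    have hpos : 0 < C * (2 ^ j * (2 ^ ε) ^ j) := by positivity
    have hmul : ENNReal.ofReal (C * (2 ^ j * (2 ^ ε) ^ j)) *
        ν (A (genInv w (((2 ^ j : ℕ) : ℝ) ^ (1 + ε))) (2 ^ j)) ≤ ENNReal.ofReal (2 ^ j) := by
      refine le_trans (mul_le_mul_left (ENNReal.ofReal_le_ofReal ?_) _) ((hA _ _).trans ?_)
      · exact mul_le_mul_of_nonneg_left (hlevel ▸ le_apply_genInv hw _) hC.le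
      · rw [← ENNReal.ofReal_natCast, Nat.cast_pow, Nat.cast_ofNat]
    rw [mul_comm, ← ENNReal.le_div_iff_mul_le (Or.inl (ENNReal.ofReal_pos.2 hpos).ne')
      (Or.inl ENNReal.ofReal_ne_top), ← ENNReal.ofReal_div_of_pos hpos] at hmul
    refine hmul.trans_eq (congrArg ENNReal.ofReal ?_)
    simp only [r, inv_pow]
    field_simp
  refine ae_eventually_notMem (ne_top_of_le_ne_top ?_ (ENNReal.tsum_le_tsum hbound))
  rw [← ENNReal.ofReal_tsum_of_nonneg (fun j => by positivity)
    ((summable_geometric_of_lt_one (by positivity) hr).mul_left _)]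
  exact ENNReal.ofReal_ne_top

theorem eventually_le_of_eventually_forall_ne {x g : ℕ → ℕ} (h₀ : x 0 = 0)
    (hup : ∀ s, x (s + 1) ≤ x s + 1) (hg : Monotone g)
    (h : ∀ᶠ j in atTop, ∀ s ≤ 2 ^ j, x s ≠ g (2 ^ j)) : ∀ᶠ t in atTop, x t ≤ g (2 * t) := by
  obtain ⟨J, hJ⟩ := eventually_atTop.1 h
  refine eventually_atTop.2 ⟨2 ^ J, fun t ht => ?_⟩
  have ht₀ : t ≠ 0 := Nat.one_le_iff_ne_zero.1 (Nat.one_le_two_pow.trans ht)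
  set j := Nat.log 2 t + 1
  have hlt : t < 2 ^ j := Nat.lt_pow_succ_log_self one_lt_two t
  have hle : 2 ^ j ≤ 2 * t := by
    rw [pow_succ, mul_comm]
    exact Nat.mul_le_mul_left 2 (Nat.pow_log_le_self 2 ht₀)
  have hJj : J ≤ j := ((Nat.pow_lt_pow_iff_right (by norm_num)).1 (ht.trans_lt hlt)).le
  calc x t ≤ g (2 ^ j) :=
        (lt_of_forall_ne_of_le_succ (by simp [h₀]) hup fun s hs => hJ j hJj s (hs.trans hlt.le)).le
    _ ≤ g (2 * t) := hg hle

theorem statement17_general {E Ω : Type*} [MeasurableSpace E] [MeasurableSpace Ω]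
    (P : Measure E)
    (p : ℕ → E → ℝ) (hp : ∀ i e, p i e ∈ Set.Ioo (0 : ℝ) 1)
    (μ : E → Measure Ω) (hprob : ∀ e, IsProbabilityMeasure (μ e))
    (X : ℕ → Ω → ℕ) (hwalk : ∀ e, IsQuenchedWalk (μ e) X (fun i => p i e))
    (w : ℕ → ℝ)
    (hwtop : Tendsto w atTop atTop)
    (hT : ∀ᵐ e ∂P, ∃ C : ℝ, 0 < C ∧ ∀ n : ℕ,
      ENNReal.ofReal (C * w n) ≤ ∫⁻ ω, hitTime X n ω ∂(μ e)) :
    ∀ ε : ℝ, 0 < ε → ∀ᵐ e ∂P, ∀ᵐ ω ∂(μ e), ∀ᶠ t : ℕ in atTop,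
      X t ω ≤ sInf {m : ℕ | ((2 * t : ℝ)) ^ (1 + ε) ≤ w m} := by
  intro ε hε
  have hw : ∀ y, ∃ m, y ≤ w m := fun y => (hwtop.eventually_ge_atTop y).exists
  have hg : Monotone fun s : ℕ => genInv w ((s : ℝ) ^ (1 + ε)) := fun a b hab =>
    genInv_mono hw (Real.rpow_le_rpow (Nat.cast_nonneg a) (Nat.cast_le.2 hab) (by linarith))
  filter_upwards [hT] with e ⟨C, hC, hCw⟩
  have hX := hwalk e
  have hpe : ∀ i, p i e ∈ Set.Ico (0 : ℝ) 1 := fun i => Set.Ioo_subset_Ico_self (hp i e)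
  have := hprob e
  have hhit : ∀ n t, ENNReal.ofReal (C * w n) * μ e (hitBy X n t) ≤ t := fun n t =>
    (mul_le_mul_left ((hCw n).trans (hX.lintegral_hitTime_le hpe n)) _).trans
      (hX.ofReal_Texp_mul_measure_hitBy_le hpe n t)
  filter_upwards [ae_eventually_notMem_of_ofReal_mul_measure_le hC hε hw hhit, hX.2.1,
    hX.ae_succ_le] with ω hω h₀ hup
  filter_upwards [eventually_le_of_eventually_forall_ne h₀ hup hg
    (hω.mono fun j hj s hs hsj => hj ⟨s, hs, hsj⟩)] with t ht
  simpa [genInv] using ht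

/-- let `w : ℤ≥0 → [0,∞)` be increasing with `w(n) → ∞`, and suppose that for
a.e. environment `e` there is a constant `C_e > 0` with `T(n) ≥ C_e w(n)` for all `n`. Then
for any `ε > 0`, for a.e. environment, almost surely under the quenched law,
`X_t ≤ w⁻¹((2t)^{1+ε})` for all but finitely many `t`, where `w⁻¹(y) = inf{m : w(m) ≥ y}`
is the generalized inverse. -/
theorem statement17 {E Ω : Type*} [MeasurableSpace E] [MeasurableSpace Ω]
    (P : Measure E) [IsProbabilityMeasure P]
    (p : ℕ → E → ℝ) (hp : ∀ i e, p i e ∈ Set.Ioo (0 : ℝ) 1)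
    (μ : E → Measure Ω) (hprob : ∀ e, IsProbabilityMeasure (μ e))
    (X : ℕ → Ω → ℕ) (hwalk : ∀ e, IsQuenchedWalk (μ e) X (fun i => p i e))
    (w : ℕ → ℝ) (hw0 : ∀ n, 0 ≤ w n) (hwmono : Monotone w)
    (hwtop : Tendsto w atTop atTop)
    (hT : ∀ᵐ e ∂P, ∃ C : ℝ, 0 < C ∧ ∀ n : ℕ,
      ENNReal.ofReal (C * w n) ≤ ∫⁻ ω, hitTime X n ω ∂(μ e)) :
    ∀ ε : ℝ, 0 < ε → ∀ᵐ e ∂P, ∀ᵐ ω ∂(μ e), ∀ᶠ t : ℕ in atTop,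
      X t ω ≤ sInf {m : ℕ | ((2 * t : ℝ)) ^ (1 + ε) ≤ w m} :=
  statement17_general P p hp μ hprob X hwalk w hwtop hT
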